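/- Let p be an odd prime, n a nonnegative integer, and k, N positive integers with k ≥ N. Then 2^{2n} * sum_{i=0}^{φ(p^N)-1} D_{2n}^{(-k-i)} ≡ (-1)^n * T_{2n+1} * φ(p^N) (mod p^N), where T_{2n+1} are the tangent numbers and φ is Euler's totient function. -/

import Mathlib

/-- Stirling numbers of the second kind, defined by the recursion
`S(0,0)=1`, `S(n,0)=S(0,m)=0` for `n,m ≥ 1`, `S(n+1,m+1)=S(n,m)+(m+1)*S(n,m+1)`. -/
def stirling2 : ℕ → ℕ → ℕ
  | 0, 0 => 1
  | 0, _ + 1 => 0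
  | _ + 1, 0 => 0
  | n + 1, m + 1 => stirling2 n m + (m + 1) * stirling2 n (m + 1)
/-- The polycosecant numbers with nonpositive upper index:
`Dneg n k = D_{2n}^{(-k)} = ∑_{i=1}^{min(2n+1,k)} (i!(i-1)!/2^{i-1}) S(k,i) S(2n+1,i)`. -/
noncomputable def Dneg (n k : ℕ) : ℝ :=
  ∑ i ∈ Finset.Icc 1 (min (2 * n + 1) k),
    (Nat.factorial i * Nat.factorial (i - 1) : ℝ) / 2 ^ (i - 1) *
      (stirling2 k i : ℝ) * (stirling2 (2 * n + 1) i : ℝ)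
/-- The tangent numbers `T_{2n+1}`, defined by `tan t = ∑_{n≥0} T_{2n+1} t^{2n+1}/(2n+1)!`,
i.e. as the Taylor coefficient `T_m = (d/dt)^m tan t |_{t=0}`. -/
noncomputable def tangentNumber (m : ℕ) : ℝ := iteratedDeriv m Real.tan 0

/-!
Both sides are sums over `1 ≤ i ≤ 2n+1` of `2^(2n+1-i) S(2n+1,i)` times, respectively,
`(i-1)! i! S(k+t,i)` (summed over `t < φ(p^N)`) and `(-1)^(i-1) i! φ(p^N)`, so it suffices to show
`(i-1)! i! ∑_t S(k+t,i) ≡ (-1)^(i-1) i! φ(p^N) (mod p^N)` for each `i`.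
Expanding `i! S(k+t,i) = ∑_j (-1)^(i-j) C(i,j) j^(k+t)`, the geometric sum `∑_t j^(k+t)` is
`≡ φ(p^N)` if `j ≡ 1 (mod p)` and `≡ 0` otherwise (Euler's theorem, and `k ≥ N` when `p ∣ j`).
The case `j ≡ 1` goes by induction on `N`, splitting the sum into `p` blocks and using
`1 + J + ⋯ + J^(p-1) ≡ p (mod p(J-1))`, which holds because `p` is odd.
For `i ≤ p` only `j = 1` survives, while for `i > p` both sides vanish mod `p`, which is enough
because `p^(N-1) ∣ φ(p^N)`.

The formula for `T_{2n+1}` comes from the derivative polynomials of `tan`, `P_{m+1} = (1+X²) P_m'`: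
the substitution `X ↦ √-1 (2X+1)` turns them into the Fubini polynomials `∑_j j! S(m,j) X^j`, and
`tan 0 = 0` corresponds to the point `X = -1/2`.
-/

open Finset Polynomial
open scoped Nat

theorem stirling2_eq_stirlingSecond : stirling2 = Nat.stirlingSecond := by
  funext n k
  induction n generalizing k with
  | zero => cases k <;> rfl
  | succ n ih =>
    cases k with
    | zero => rfl
    | succ k => rw [stirling2, Nat.stirlingSecond_succ_succ, ih, ih, add_comm]

namespace Nat

theorem mul_descFactorial (x j : ℕ) :
    x * x.descFactorial j = x.descFactorial (j + 1) + j * x.descFactorial j := by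
  rcases le_or_gt j x with hjx | hxj
  · rw [descFactorial_succ, ← add_mul, Nat.sub_add_cancel hjx]
  · simp [descFactorial_eq_zero_iff_lt.2 hxj]

theorem pow_eq_sum_stirlingSecond_mul_descFactorial (κ x : ℕ) :
    x ^ κ = ∑ j ∈ range (κ + 1), stirlingSecond κ j * x.descFactorial j := by
  induction κ with
  | zero => simp
  | succ κ ih =>
    have hshift : ∑ j ∈ range (κ + 1), stirlingSecond κ j * (j * x.descFactorial j) =
        ∑ j ∈ range (κ + 1), (j + 1) * stirlingSecond κ (j + 1) * x.descFactorial (j + 1) := by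
      rw [sum_range_succ', sum_range_succ, stirlingSecond_eq_zero_of_lt (lt_succ_self κ)]
      simp only [zero_mul, mul_zero, add_zero]
      exact sum_congr rfl fun j _ => by ring
    calc x ^ (κ + 1)
        = ∑ j ∈ range (κ + 1), stirlingSecond κ j * (x * x.descFactorial j) := by
          rw [pow_succ, ih, sum_mul]
          exact sum_congr rfl fun j _ => by ring
      _ = ∑ j ∈ range (κ + 1), stirlingSecond (κ + 1) (j + 1) * x.descFactorial (j + 1) := by
          simp only [mul_descFactorial, mul_add, sum_add_distrib, hshift, stirlingSecond_succ_succ,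
            add_mul]
          ring
      _ = _ := by simp [sum_range_succ' _ (κ + 1)]

/-- `i! S(κ,i)` is the `i`-th forward difference of `x ↦ x^κ` at `0`. -/
theorem factorial_mul_stirlingSecond (κ i : ℕ) :
    (i ! * stirlingSecond κ i : ℤ) =
      ∑ j ∈ range (i + 1), (-1) ^ (i - j) * i.choose j * (j : ℤ) ^ κ := by
  have hpow : (fun x : ℕ => (x : ℤ) ^ κ) =
      ∑ j ∈ range (κ + 1), (j ! * stirlingSecond κ j : ℤ) • fun x : ℕ => (x.choose j : ℤ) := by
    funext x
    have := congrArg (Nat.cast : ℕ → ℤ) (pow_eq_sum_stirlingSecond_mul_descFactorial κ x)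
    push_cast [descFactorial_eq_factorial_mul_choose] at this
    rw [this, Finset.sum_apply]
    exact sum_congr rfl fun j _ => by simp only [Pi.smul_apply, smul_eq_mul]; ring
  have h := fwdDiff_iter_eq_sum_shift 1 (fun x : ℕ => (x : ℤ) ^ κ) i 0
  simp only [zero_add, smul_eq_mul, mul_one] at h
  rw [← h, hpow]
  simp only [fwdDiff_iter_finsetSum, fwdDiff_iter_const_smul, Finset.sum_apply, Pi.smul_apply,
    fwdDiff_iter_choose_zero, smul_eq_mul, mul_ite, mul_one, mul_zero, sum_ite_eq, mem_range]
  split_ifs with hi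
  · rfl
  · simp [stirlingSecond_eq_zero_of_lt (not_lt.1 hi)]

end Nat

theorem geom_sum_range_mul {R : Type*} [Semiring R] (x : R) (a b : ℕ) :
    ∑ t ∈ range (a * b), x ^ t = (∑ u ∈ range a, (x ^ b) ^ u) * ∑ t ∈ range b, x ^ t := by
  induction a with
  | zero => simp
  | succ a ih =>
    rw [Nat.succ_mul, sum_range_add, ih, sum_range_succ, add_mul]
    congr 1
    rw [mul_sum]
    exact sum_congr rfl fun t _ => by rw [← pow_mul, ← pow_add, mul_comm b a]

theorem mul_sub_one_dvd_geom_sum_sub {m : ℕ} (hm : Odd m) {J : ℤ} (hJ : J ≡ 1 [ZMOD m]) :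
    m * (J - 1) ∣ ∑ u ∈ range m, J ^ u - m := by
  have hsplit : ∑ u ∈ range m, J ^ u - m = (J - 1) * ∑ u ∈ range m, ∑ t ∈ range u, J ^ t := by
    rw [mul_sum]
    simp only [mul_geom_sum, sum_sub_distrib]
    simp
  rw [hsplit, mul_comm (m : ℤ)]
  refine mul_dvd_mul_left _ (Int.modEq_zero_iff_dvd.1 ?_)
  obtain ⟨a, rfl⟩ := hm
  have hgauss : ∑ u ∈ range (2 * a + 1), u = (2 * a + 1) * a := by
    have h := Finset.sum_range_id_mul_two (2 * a + 1)
    rw [Nat.add_sub_cancel] at h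
    exact Nat.eq_of_mul_eq_mul_right two_pos (h.trans (by ring))
  calc ∑ u ∈ range (2 * a + 1), ∑ t ∈ range u, J ^ t
      ≡ ∑ u ∈ range (2 * a + 1), (u : ℤ) [ZMOD (2 * a + 1 : ℕ)] :=
        Int.ModEq.sum fun u _ => by simpa using Int.ModEq.sum (s := range u) fun t _ => hJ.pow t
    _ = (2 * a + 1 : ℕ) * a := by rw [← Nat.cast_sum, hgauss, Nat.cast_mul]
    _ ≡ 0 [ZMOD (2 * a + 1 : ℕ)] := (dvd_mul_right _ _).modEq_zero_int

theorem Int.natCast_pow_totient_modEq_one {x n : ℕ} (h : x.Coprime n) :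
    (x : ℤ) ^ φ n ≡ 1 [ZMOD n] := by
  exact_mod_cast Int.natCast_modEq_iff.2 (Nat.ModEq.pow_totient h)

theorem Int.ModEq.totient_prime_pow_mul {p : ℕ} (hp : p.Prime) (N : ℕ) {a b : ℤ}
    (h : a ≡ b [ZMOD p]) : φ (p ^ N) * a ≡ φ (p ^ N) * b [ZMOD p ^ N] := by
  cases N with
  | zero => simp [Int.modEq_one]
  | succ N =>
    have := (h.mul_left' (c := (p : ℤ) ^ N)).mul_left ((p - 1 : ℕ) : ℤ)
    rw [Nat.totient_prime_pow_succ hp, pow_succ]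
    push_cast at this ⊢
    convert this using 1 <;> ring

theorem geom_sum_totient_prime_pow_modEq {p : ℕ} (hp : p.Prime) (hodd : Odd p) {x : ℕ}
    (hx : x ≡ 1 [MOD p]) :
    ∀ N : ℕ, ∑ t ∈ range (φ (p ^ N)), (x : ℤ) ^ t ≡ φ (p ^ N) [ZMOD p ^ N]
  | 0 => by simp
  | 1 => by
    have hx' : (x : ℤ) ≡ 1 [ZMOD p] := by exact_mod_cast Int.natCast_modEq_iff.2 hx
    simpa using Int.ModEq.sum fun t (_ : t ∈ range (φ p)) => hx'.pow t
  | N + 2 => by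
    have hφ : φ (p ^ (N + 2)) = p * φ (p ^ (N + 1)) := by
      rw [Nat.totient_prime_pow_succ hp, Nat.totient_prime_pow_succ hp, pow_succ]; ring
    have hcop : x.Coprime (p ^ (N + 1)) :=
      Nat.Coprime.pow_right _ ((Nat.coprime_of_mul_modEq_one 1 (by simpa using hx)))
    have hJ := Int.natCast_pow_totient_modEq_one hcop
    have hA : ∑ u ∈ range p, ((x : ℤ) ^ φ (p ^ (N + 1))) ^ u ≡ p [ZMOD p ^ (N + 2)] := by
      refine (Int.modEq_iff_dvd.2 (dvd_trans ?_ (mul_sub_one_dvd_geom_sum_sub hodd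
        (hJ.of_dvd (by push_cast; exact dvd_pow_self _ N.succ_ne_zero))))).symm
      rw [pow_succ']
      exact mul_dvd_mul_left _ (Int.modEq_iff_dvd.1 hJ.symm)
    calc ∑ t ∈ range (φ (p ^ (N + 2))), (x : ℤ) ^ t
        = (∑ u ∈ range p, ((x : ℤ) ^ φ (p ^ (N + 1))) ^ u) *
            ∑ t ∈ range (φ (p ^ (N + 1))), (x : ℤ) ^ t := by
          rw [hφ, geom_sum_range_mul]
      _ ≡ p * ∑ t ∈ range (φ (p ^ (N + 1))), (x : ℤ) ^ t [ZMOD p ^ (N + 2)] := hA.mul_right _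
      _ ≡ p * φ (p ^ (N + 1)) [ZMOD p ^ (N + 2)] := by
          rw [pow_succ' _ (N + 1)]
          exact (geom_sum_totient_prime_pow_modEq hp hodd hx (N + 1)).mul_left'
      _ = φ (p ^ (N + 2)) := by push_cast [hφ]; rfl

theorem sum_pow_add_totient_prime_pow_modEq {p N k : ℕ} (hp : p.Prime) (hodd : Odd p)
    (hkN : N ≤ k) (x : ℕ) :
    ∑ t ∈ range (φ (p ^ N)), (x : ℤ) ^ (k + t) ≡
      if x ≡ 1 [MOD p] then (φ (p ^ N) : ℤ) else 0 [ZMOD p ^ N] := by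
  have hsplit : ∑ t ∈ range (φ (p ^ N)), (x : ℤ) ^ (k + t) =
      (x : ℤ) ^ k * ∑ t ∈ range (φ (p ^ N)), (x : ℤ) ^ t := by
    simp only [pow_add, mul_sum]
  rw [hsplit]
  split_ifs with h1
  · have hxk : (x : ℤ) ^ k ≡ 1 [ZMOD p] := by
      simpa using (Int.natCast_modEq_iff.2 h1).pow k
    calc (x : ℤ) ^ k * ∑ t ∈ range (φ (p ^ N)), (x : ℤ) ^ t
        ≡ (x : ℤ) ^ k * φ (p ^ N) [ZMOD p ^ N] :=
          (geom_sum_totient_prime_pow_modEq hp hodd h1 N).mul_left _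
      _ = φ (p ^ N) * (x : ℤ) ^ k := mul_comm _ _
      _ ≡ φ (p ^ N) * 1 [ZMOD p ^ N] := hxk.totient_prime_pow_mul hp N
      _ = φ (p ^ N) := mul_one _
  refine Int.modEq_zero_iff_dvd.2 ?_
  by_cases h2 : p ∣ x
  · exact dvd_mul_of_dvd_left ((pow_dvd_pow_of_dvd (Int.natCast_dvd_natCast.2 h2) N).trans
      (pow_dvd_pow _ hkN)) _
  · have hcop : x.Coprime (p ^ N) :=
      Nat.Coprime.pow_right _ ((Nat.Prime.coprime_iff_not_dvd hp).2 h2).symm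
    have hsub : IsCoprime ((p : ℤ) ^ N) ((x : ℤ) - 1) := by
      refine IsCoprime.pow_left ((Prime.coprime_iff_not_dvd (Nat.prime_iff_prime_int.1 hp)).2 ?_)
      rw [← Int.modEq_iff_dvd, Int.modEq_comm]
      exact fun h => h1 (Int.natCast_modEq_iff.1 (by exact_mod_cast h))
    refine dvd_mul_of_dvd_right (hsub.dvd_of_dvd_mul_left ?_) _
    rw [mul_geom_sum]
    exact Int.modEq_iff_dvd.1 (Int.natCast_pow_totient_modEq_one hcop).symm

def altBinomialSection (p i : ℕ) : ℤ :=
  ∑ j ∈ (range (i + 1)).filter (· ≡ 1 [MOD p]), (-1) ^ (i - j) * (i.choose j : ℤ)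

theorem factorial_mul_sum_stirlingSecond_modEq {p N k : ℕ} (hp : p.Prime) (hodd : Odd p)
    (hkN : N ≤ k) (i : ℕ) :
    (i ! : ℤ) * ∑ t ∈ range (φ (p ^ N)), (Nat.stirlingSecond (k + t) i : ℤ) ≡
      φ (p ^ N) * altBinomialSection p i [ZMOD p ^ N] := by
  calc (i ! : ℤ) * ∑ t ∈ range (φ (p ^ N)), (Nat.stirlingSecond (k + t) i : ℤ)
      = ∑ j ∈ range (i + 1), (-1) ^ (i - j) * (i.choose j : ℤ) *
          ∑ t ∈ range (φ (p ^ N)), (j : ℤ) ^ (k + t) := by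
        simp only [mul_sum, Nat.factorial_mul_stirlingSecond]
        rw [sum_comm]
    _ ≡ ∑ j ∈ range (i + 1), (-1) ^ (i - j) * (i.choose j : ℤ) *
          if j ≡ 1 [MOD p] then (φ (p ^ N) : ℤ) else 0 [ZMOD p ^ N] :=
        Int.ModEq.sum fun j _ => (sum_pow_add_totient_prime_pow_modEq hp hodd hkN j).mul_left _
    _ = _ := by
        rw [altBinomialSection, sum_filter, mul_sum]
        exact sum_congr rfl fun j _ => by split_ifs <;> ring

theorem altBinomialSection_of_le {p : ℕ} (hp : p.Prime) {i : ℕ} (hi : 1 ≤ i) (hip : i ≤ p) :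
    altBinomialSection p i = (-1) ^ (i - 1) * i := by
  have hfilter : (range (i + 1)).filter (· ≡ 1 [MOD p]) = {1} := by
    ext j
    simp only [mem_filter, mem_range, mem_singleton, Nat.ModEq, Nat.one_mod_eq_one.2 hp.ne_one]
    constructor
    · rintro ⟨hj, hjp⟩
      rcases (Nat.lt_succ_iff.1 hj).trans hip |>.lt_or_eq with hlt | rfl
      · rwa [Nat.mod_eq_of_lt hlt] at hjp
      · simp at hjp
    · rintro rfl
      exact ⟨by omega, Nat.mod_eq_of_lt hp.one_lt⟩
  simp [altBinomialSection, hfilter]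

theorem factorial_mul_altBinomialSection_modEq {p : ℕ} (hp : p.Prime) {i : ℕ} (hi : 1 ≤ i) :
    ((i - 1) ! : ℤ) * altBinomialSection p i ≡ (-1) ^ (i - 1) * i ! [ZMOD p] := by
  rcases le_or_gt i p with hip | hpi
  · have h : ((i - 1) ! : ℤ) * ((-1) ^ (i - 1) * i) = (-1) ^ (i - 1) * i ! := by
      rw [← Nat.mul_factorial_pred (by omega : i ≠ 0)]
      push_cast
      ring
    rw [altBinomialSection_of_le hp hi hip, h]
  · have hdvd : ∀ m, p ≤ m → (p : ℤ) ∣ m ! := fun m hm =>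
      Int.natCast_dvd_natCast.2 (hp.dvd_factorial.2 hm)
    exact ((dvd_mul_of_dvd_left (hdvd _ (by omega)) _).modEq_zero_int).trans
      ((dvd_mul_of_dvd_right (hdvd _ hpi.le) _).modEq_zero_int).symm

theorem factorial_mul_factorial_mul_sum_stirlingSecond_modEq {p N k : ℕ} (hp : p.Prime)
    (hodd : Odd p) (hkN : N ≤ k) {i : ℕ} (hi : 1 ≤ i) :
    ((i - 1) ! * i ! : ℤ) * ∑ t ∈ range (φ (p ^ N)), (Nat.stirlingSecond (k + t) i : ℤ) ≡
      (-1) ^ (i - 1) * i ! * φ (p ^ N) [ZMOD p ^ N] :=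
  calc ((i - 1) ! * i ! : ℤ) * ∑ t ∈ range (φ (p ^ N)), (Nat.stirlingSecond (k + t) i : ℤ)
      = (i - 1) ! * ((i ! : ℤ) * ∑ t ∈ range (φ (p ^ N)), (Nat.stirlingSecond (k + t) i : ℤ)) :=
        mul_assoc _ _ _
    _ ≡ (i - 1) ! * (φ (p ^ N) * altBinomialSection p i) [ZMOD p ^ N] :=
        (factorial_mul_sum_stirlingSecond_modEq hp hodd hkN i).mul_left _
    _ = φ (p ^ N) * ((i - 1) ! * altBinomialSection p i) := mul_left_comm _ _ _
    _ ≡ φ (p ^ N) * ((-1) ^ (i - 1) * i !) [ZMOD p ^ N] :=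
        (factorial_mul_altBinomialSection_modEq hp hi).totient_prime_pow_mul hp N
    _ = (-1) ^ (i - 1) * i ! * φ (p ^ N) := mul_comm _ _

noncomputable def derivPoly {R : Type*} [CommSemiring R] (w : R[X]) : ℕ → R[X]
  | 0 => X
  | m + 1 => derivative (derivPoly w m) * w

theorem map_derivPoly {R S : Type*} [CommSemiring R] [CommSemiring S] (f : R →+* S) (w : R[X])
    (m : ℕ) : (derivPoly w m).map f = derivPoly (w.map f) m := by
  induction m with
  | zero => simp [derivPoly]
  | succ m ih => simp [derivPoly, ← ih, derivative_map]

theorem iteratedDeriv_eq_eval_derivPoly {𝕜 : Type*} [NontriviallyNormedField 𝕜] {u : 𝕜 → 𝕜}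
    {s : Set 𝕜} (hs : IsOpen s) {w : 𝕜[X]} (hu : ∀ x ∈ s, HasDerivAt u (w.eval (u x)) x)
    (m : ℕ) : ∀ x ∈ s, iteratedDeriv m u x = (derivPoly w m).eval (u x) := by
  induction m with
  | zero => simp [derivPoly]
  | succ m ih =>
    intro x hx
    have hloc : iteratedDeriv m u =ᶠ[nhds x] fun y => (derivPoly w m).eval (u y) :=
      Filter.eventuallyEq_of_mem (hs.mem_nhds hx) ih
    rw [iteratedDeriv_succ, hloc.deriv_eq, derivPoly, eval_mul]
    exact ((derivPoly w m).hasDerivAt (u x)).comp x (hu x hx) |>.deriv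

theorem tangentNumber_eq_eval_derivPoly (m : ℕ) :
    tangentNumber m = ((derivPoly (X ^ 2 + 1 : ℤ[X]) m).eval 0 : ℤ) := by
  have hu : ∀ x ∈ {x : ℝ | Real.cos x ≠ 0},
      HasDerivAt Real.tan (((X ^ 2 + 1 : ℤ[X]).map (Int.castRingHom ℝ)).eval (Real.tan x)) x := by
    intro x hx
    convert Real.hasDerivAt_tan hx using 1
    simp [← Real.inv_one_add_tan_sq hx, add_comm]
  rw [tangentNumber, iteratedDeriv_eq_eval_derivPoly (isOpen_ne.preimage Real.continuous_cos) hu m 0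
    (by simp), Real.tan_zero, ← map_derivPoly, eval_zero_map, eq_intCast]

/-- The substitution `X ↦ i(2X+1)` turns the vector field `1 + X²` into `-4X(X+1)`. -/
theorem derivPoly_succ_comp {R : Type*} [CommRing R] {i : R} (hi : i ^ 2 = -1) (m : ℕ) :
    (derivPoly (X ^ 2 + 1 : R[X]) (m + 1)).comp (C i * (2 * X + 1)) =
      C (2 * i) * X * (X + 1) *
        derivative ((derivPoly (X ^ 2 + 1 : R[X]) m).comp (C i * (2 * X + 1))) := by
  have hI : (C i : R[X]) ^ 2 = -1 := by rw [← C_pow, hi, C_neg, C_1]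
  rw [derivPoly, mul_comp, derivative_comp]
  simp only [add_comp, pow_comp, X_comp, one_comp, derivative_mul, derivative_C, derivative_add,
    derivative_X, derivative_one, derivative_ofNat, C_mul, map_ofNat]
  linear_combination (derivative (derivPoly (X ^ 2 + 1 : R[X]) m)).comp (C i * (2 * X + 1)) * hI

noncomputable def fubiniPoly (R : Type*) [CommSemiring R] : ℕ → R[X]
  | 0 => 1
  | m + 1 => X * derivative ((1 + X) * fubiniPoly R m)

theorem coeff_fubiniPoly (R : Type*) [CommSemiring R] (m j : ℕ) :
    (fubiniPoly R m).coeff j = (j ! * Nat.stirlingSecond m j : ℕ) := by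
  induction m generalizing j with
  | zero => cases j <;> simp [fubiniPoly, coeff_one]
  | succ m ih =>
    cases j with
    | zero => simp [fubiniPoly]
    | succ j =>
      simp only [fubiniPoly, coeff_X_mul, coeff_derivative, add_mul, one_mul, coeff_add, ih,
        Nat.stirlingSecond_succ_succ, Nat.factorial_succ]
      push_cast
      ring

theorem eval_fubiniPoly (R : Type*) [CommSemiring R] (m : ℕ) (x : R) :
    (fubiniPoly R m).eval x = ∑ j ∈ range (m + 1), (j ! * Nat.stirlingSecond m j : ℕ) * x ^ j := by
  have hdeg : (fubiniPoly R m).natDegree < m + 1 :=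
    Nat.lt_succ_of_le (natDegree_le_iff_coeff_eq_zero.2 fun j hj => by
      simp [coeff_fubiniPoly, Nat.stirlingSecond_eq_zero_of_lt hj])
  simp [eval_eq_sum_range' hdeg, coeff_fubiniPoly]

theorem derivative_derivPoly_comp {R : Type*} [CommRing R] {i : R} (hi : i ^ 2 = -1) (m : ℕ) :
    derivative ((derivPoly (X ^ 2 + 1 : R[X]) m).comp (C i * (2 * X + 1))) =
      C ((2 * i) ^ (m + 1)) * derivative ((1 + X) * fubiniPoly R m) := by
  induction m with
  | zero =>
    simp only [derivPoly, X_comp, derivative_mul, derivative_C, zero_mul, derivative_add,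
      derivative_ofNat, derivative_X, mul_one, zero_add, derivative_one, add_zero, pow_one, map_mul,
      map_ofNat C 2, fubiniPoly]
    ring
  | succ m ih =>
    rw [derivPoly_succ_comp hi, ih, fubiniPoly,
      show C (2 * i) * X * (X + 1) * (C ((2 * i) ^ (m + 1)) * derivative ((1 + X) * fubiniPoly R m))
        = C ((2 * i) ^ (m + 2)) * ((1 + X) * (X * derivative ((1 + X) * fubiniPoly R m))) by
        simp only [map_mul, map_pow]; ring, derivative_C_mul]

theorem eval_zero_derivPoly_succ (m : ℕ) :
    (derivPoly (X ^ 2 + 1 : ℂ[X]) (m + 1)).eval 0 =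
      (2 * Complex.I) ^ (m + 2) / 2 * (fubiniPoly ℂ (m + 1)).eval (-1 / 2) := by
  have hL : (C Complex.I * (2 * X + 1) : ℂ[X]).eval (-1 / 2) = 0 := by norm_num
  rw [← hL, ← eval_comp, derivPoly_succ_comp Complex.I_sq, derivative_derivPoly_comp Complex.I_sq,
    fubiniPoly]
  simp only [eval_mul, eval_C, eval_X, eval_add, eval_one]
  ring

theorem neg_one_pow_mul_tangentNumber (n : ℕ) :
    (-1) ^ n * tangentNumber (2 * n + 1) =
      ((∑ i ∈ Icc 1 (2 * n + 1), (-1) ^ (i - 1) * 2 ^ (2 * n + 1 - i) *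
        (i ! * Nat.stirlingSecond (2 * n + 1) i : ℕ) : ℤ) : ℝ) := by
  rw [tangentNumber_eq_eval_derivPoly]
  norm_cast
  apply Int.cast_injective (α := ℂ)
  have hcast : (((derivPoly (X ^ 2 + 1 : ℤ[X]) (2 * n + 1)).eval 0 : ℤ) : ℂ) =
      (derivPoly (X ^ 2 + 1 : ℂ[X]) (2 * n + 1)).eval 0 := by
    rw [← eq_intCast (Int.castRingHom ℂ), ← eval_zero_map, map_derivPoly]
    simp
  have hI : (2 * Complex.I) ^ (2 * n + 2) = (-1) ^ (n + 1) * 2 ^ (2 * n + 2) := by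
    rw [show 2 * n + 2 = 2 * (n + 1) by ring, pow_mul, pow_mul, ← mul_pow, mul_pow, Complex.I_sq]
    ring
  have hsign : Odd (n + (n + 1)) := ⟨n, by ring⟩
  have hfactor : (-1) ^ n * ((2 * Complex.I) ^ (2 * n + 2) / 2) = -2 ^ (2 * n + 1) :=
    calc (-1) ^ n * ((2 * Complex.I) ^ (2 * n + 2) / 2)
        = (-1) ^ (n + (n + 1)) * 2 ^ (2 * n + 1) := by rw [hI]; ring
      _ = -2 ^ (2 * n + 1) := by rw [hsign.neg_one_pow, neg_one_mul]
  have hrange (f : ℕ → ℂ) (h0 : f 0 = 0) :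
      ∑ i ∈ range (2 * n + 2), f i = ∑ i ∈ Icc 1 (2 * n + 1), f i := by
    refine (sum_subset (fun i hi => by simp only [mem_Icc, mem_range] at hi ⊢; omega) fun i hi hni => ?_).symm
    obtain rfl : i = 0 := by simp only [mem_Icc, mem_range] at hi hni; omega
    exact h0
  push_cast
  rw [hcast, eval_zero_derivPoly_succ, ← mul_assoc, hfactor, eval_fubiniPoly, hrange _ (by simp),
    mul_sum]
  refine sum_congr rfl fun i hi => ?_
  obtain ⟨j, rfl⟩ : ∃ j, i = j + 1 := ⟨i - 1, by rw [mem_Icc] at hi; omega⟩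
  obtain ⟨d, hd⟩ : ∃ d, 2 * n = j + d := ⟨2 * n - j, by rw [mem_Icc] at hi; omega⟩
  rw [show 2 * n + 1 - (j + 1) = d by omega, Nat.add_sub_cancel,
    show 2 * n + 1 = d + (j + 1) by omega, div_pow]
  push_cast
  field_simp
  ring

theorem two_pow_mul_Dneg (n κ : ℕ) :
    2 ^ (2 * n) * Dneg n κ = ((∑ i ∈ Icc 1 (2 * n + 1), 2 ^ (2 * n + 1 - i) *
      Nat.stirlingSecond (2 * n + 1) i * ((i - 1)! * i ! * Nat.stirlingSecond κ i) : ℕ) : ℝ) := by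
  rw [Dneg, stirling2_eq_stirlingSecond, mul_sum]
  push_cast
  refine (sum_subset (Icc_subset_Icc_right (min_le_left _ _)) fun i hi hni => ?_).trans
    (sum_congr rfl fun i hi => ?_)
  · simp [Nat.stirlingSecond_eq_zero_of_lt (show κ < i by simp only [mem_Icc] at hi hni; omega)]
  · obtain ⟨j, rfl⟩ : ∃ j, i = j + 1 := ⟨i - 1, by rw [mem_Icc] at hi; omega⟩
    have h2 : (2 : ℝ) ^ (2 * n) = 2 ^ (2 * n + 1 - (j + 1)) * 2 ^ j := by
      rw [← pow_add]; congr 1; rw [mem_Icc] at hi; omega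
    rw [Nat.add_sub_cancel, h2]
    field_simp

theorem stmt16_general (p n k N : ℕ) (hp : p.Prime) (hodd : Odd p) (hkN : N ≤ k) :
    ∃ c : ℤ,
      2 ^ (2 * n) * ∑ i ∈ Finset.range (Nat.totient (p ^ N)), Dneg n (k + i) -
        (-1 : ℝ) ^ n * tangentNumber (2 * n + 1) * (Nat.totient (p ^ N) : ℝ) =
      (p : ℝ) ^ N * c := by
  obtain ⟨c, hc⟩ : (p : ℤ) ^ N ∣ ∑ i ∈ Icc 1 (2 * n + 1),
      2 ^ (2 * n + 1 - i) * (Nat.stirlingSecond (2 * n + 1) i : ℤ) *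
        (((i - 1)! * i ! : ℤ) * ∑ t ∈ range (φ (p ^ N)), (Nat.stirlingSecond (k + t) i : ℤ) -
          (-1) ^ (i - 1) * i ! * φ (p ^ N)) :=
    dvd_sum fun i hi => dvd_mul_of_dvd_right (Int.modEq_iff_dvd.1
      (factorial_mul_factorial_mul_sum_stirlingSecond_modEq hp hodd hkN (mem_Icc.1 hi).1).symm) _
  refine ⟨c, ?_⟩
  rw [mul_sum, neg_one_pow_mul_tangentNumber]
  simp only [two_pow_mul_Dneg]
  norm_cast
  push_cast
  rw [← hc, sum_comm, sum_mul, ← sum_sub_distrib]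
  refine sum_congr rfl fun i _ => ?_
  simp only [mul_sub, mul_sum]
  congr 1
  ring

theorem stmt16 (p n k N : ℕ) (hp : p.Prime) (hodd : Odd p) (hk : 0 < k) (hN : 0 < N)
    (hkN : N ≤ k) :
    ∃ c : ℤ,
      2 ^ (2 * n) * ∑ i ∈ Finset.range (Nat.totient (p ^ N)), Dneg n (k + i) -
        (-1 : ℝ) ^ n * tangentNumber (2 * n + 1) * (Nat.totient (p ^ N) : ℝ) =
      (p : ℝ) ^ N * c :=
  stmt16_general p n k N hp hodd hkN
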